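/- arXiv:2305.06518 — 2 statements merged into one kernel-verified Lean document; each statement's English description precedes it below -/
import Mathlib

section
/- Let F be a finite field, n, m ≥ 1, and let d_1, ..., d_m, p_1, ..., p_m be mutually independent random variables in F^n with each p_i uniform on F^n. Set q_i = d_i + p_i. Then for every subset B ⊆ {1,...,m}, the family (d_i)_{i∉B} is independent of the joint random variable ((q_1,...,q_m), (d_i)_{i∈B}, (p_i)_{i∈B}). -/
open MeasureTheory ProbabilityTheory

/-!
For `i ∉ B` the pad `p i` is uniform and independent of `d i`, and the shear
`(x, y) ↦ (x, x + y)` preserves the product of any law with the (translation invariant) uniform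
law; so the unmasked demands `(d i)_{i ∉ B}` are independent of their masks `(q i)_{i ∉ B}`.
Both are functions of the pairs `(d i, p i)_{i ∉ B}`, which are independent of
`(d i, p i)_{i ∈ B}`, and these pairs determine the remaining masked demands `q i`, `i ∈ B`.
-/

instance PMF.isAddLeftInvariant_toMeasure_uniformOfFintype {G : Type*} [AddGroup G] [Fintype G]
    [MeasurableSpace G] [DiscreteMeasurableSpace G] :
    (PMF.uniformOfFintype G).toMeasure.IsAddLeftInvariant := by
  refine ⟨fun g => Measure.ext_of_singleton fun x => ?_⟩
  have hpre : (g + ·) ⁻¹' {x} = {-g + x} := by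
    ext y
    simp [eq_neg_add_iff_add_eq]
  rw [Measure.map_apply .of_discrete (measurableSet_singleton x), hpre,
    PMF.toMeasure_apply_singleton _ _ (measurableSet_singleton _),
    PMF.toMeasure_apply_singleton _ _ (measurableSet_singleton _),
    PMF.uniformOfFintype_apply, PMF.uniformOfFintype_apply]

namespace ProbabilityTheory

variable {Ω α β γ : Type*} [MeasurableSpace Ω] {μ : Measure Ω}
  [MeasurableSpace α] [MeasurableSpace β] [MeasurableSpace γ]

theorem IndepFun.indepFun_add_of_isAddLeftInvariant [IsProbabilityMeasure μ] [AddGroup α]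
    [MeasurableAdd₂ α] {X Y : Ω → α}
    (hX : Measurable X) (hY : Measurable Y) (hXY : IndepFun X Y μ)
    [(μ.map Y).IsAddLeftInvariant] : IndepFun X (X + Y) μ := by
  have hlaw : μ.map (fun ω => (X ω, (X + Y) ω)) = (μ.map X).prod (μ.map Y) := by
    have hshear : (fun ω => (X ω, (X + Y) ω))
        = (fun z : α × α => (z.1, z.1 + z.2)) ∘ fun ω => (X ω, Y ω) := rfl
    rw [hshear, ← Measure.map_map (by fun_prop) (hX.prodMk hY),
      (indepFun_iff_map_prod_eq_prod_map_map hX.aemeasurable hY.aemeasurable).1 hXY]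
    exact (measurePreserving_prod_add _ _).map_eq
  have hsum : μ.map (X + Y) = μ.map Y := by
    have : IsProbabilityMeasure (μ.map X) := Measure.isProbabilityMeasure_map hX.aemeasurable
    have hsnd := congrArg (Measure.map Prod.snd) hlaw
    rwa [Measure.map_map measurable_snd (hX.prodMk (hX.add hY)), Measure.map_snd_prod,
      measure_univ, one_smul] at hsnd
  rw [indepFun_iff_map_prod_eq_prod_map_map hX.aemeasurable (hX.add hY).aemeasurable, hsum]
  exact hlaw

theorem IndepFun.indepFun_prodMk_right [IsProbabilityMeasure μ]
    {X : Ω → α} {Y : Ω → β} {Z : Ω → γ}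
    (hX : Measurable X) (hY : Measurable Y) (hZ : Measurable Z)
    (hXY_Z : IndepFun (fun ω => (X ω, Y ω)) Z μ) (hXY : IndepFun X Y μ) :
    IndepFun X (fun ω => (Y ω, Z ω)) μ := by
  have hYZ : IndepFun Y Z μ := hXY_Z.comp measurable_snd measurable_id
  rw [indepFun_iff_map_prod_eq_prod_map_map hX.aemeasurable hY.aemeasurable] at hXY
  rw [indepFun_iff_map_prod_eq_prod_map_map (hX.prodMk hY).aemeasurable hZ.aemeasurable,
    hXY] at hXY_Z
  rw [indepFun_iff_map_prod_eq_prod_map_map hY.aemeasurable hZ.aemeasurable] at hYZ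
  rw [indepFun_iff_map_prod_eq_prod_map_map hX.aemeasurable (hY.prodMk hZ).aemeasurable, hYZ]
  calc μ.map (fun ω => (X ω, (Y ω, Z ω)))
      = (μ.map (fun ω => ((X ω, Y ω), Z ω))).map MeasurableEquiv.prodAssoc := by
        rw [Measure.map_map MeasurableEquiv.prodAssoc.measurable ((hX.prodMk hY).prodMk hZ)]
        rfl
    _ = (μ.map X).prod ((μ.map Y).prod (μ.map Z)) := by
        rw [hXY_Z]
        exact (measurePreserving_prodAssoc _ _ _).map_eq

theorem IndepFun.indepFun_add_prodMk [IsProbabilityMeasure μ] [AddGroup α] [MeasurableAdd₂ α]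
    {X Y : Ω → α} {Z : Ω → β} (hX : Measurable X) (hY : Measurable Y) (hZ : Measurable Z)
    (hXY_Z : IndepFun (fun ω => (X ω, Y ω)) Z μ) (hXY : IndepFun X Y μ)
    [(μ.map Y).IsAddLeftInvariant] : IndepFun X (fun ω => ((X + Y) ω, Z ω)) μ :=
  (hXY_Z.comp (φ := fun z => (z.1, z.1 + z.2)) (by fun_prop) measurable_id).indepFun_prodMk_right
    hX (hX.add hY) hZ (hXY.indepFun_add_of_isAddLeftInvariant hX hY)

theorem iIndepFun.isAddLeftInvariant_map [IsProbabilityMeasure μ] {ι : Type*} [Fintype ι]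
    [AddGroup α] [MeasurableAdd α] {f : ι → Ω → α} (h : iIndepFun f μ)
    (hf : ∀ i, Measurable (f i)) (hinv : ∀ i, (μ.map (f i)).IsAddLeftInvariant) :
    (μ.map fun ω i => f i ω).IsAddLeftInvariant := by
  have := fun i => Measure.isProbabilityMeasure_map (μ := μ) (hf i).aemeasurable
  rw [(iIndepFun_iff_map_fun_eq_pi_map fun i => (hf i).aemeasurable).1 h]
  infer_instance

theorem iIndepFun.indepFun_of_disjoint_range {ι κ κ' : Type*} [Fintype κ] [Fintype κ']
    {f : ι → Ω → α} (h : iIndepFun f μ) (hf : ∀ i, Measurable (f i))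
    {a : κ → ι} {b : κ' → ι} (hab : Disjoint (Set.range a) (Set.range b)) :
    IndepFun (fun ω k => f (a k) ω) (fun ω k => f (b k) ω) μ := by
  classical
  have hST : Disjoint (Finset.univ.image a) (Finset.univ.image b) := by
    simpa [← Finset.disjoint_coe] using hab
  exact (h.indepFun_finset _ _ hST hf).comp
    (φ := fun g k => g ⟨a k, Finset.mem_image_of_mem _ (Finset.mem_univ k)⟩)
    (ψ := fun g k => g ⟨b k, Finset.mem_image_of_mem _ (Finset.mem_univ k)⟩)
    (measurable_pi_lambda _ fun _ => measurable_pi_apply _)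
    (measurable_pi_lambda _ fun _ => measurable_pi_apply _)

end ProbabilityTheory

theorem stmt_10_general {Ω : Type*} [MeasurableSpace Ω] (μ : Measure Ω) [IsProbabilityMeasure μ]
    (F : Type*) [Field F] [Fintype F]
    (n m : ℕ)
    [MeasurableSpace (Fin n → F)] [MeasurableSingletonClass (Fin n → F)]
    (d p : Fin m → Ω → (Fin n → F))
    (hmd : ∀ i, Measurable (d i)) (hmp : ∀ i, Measurable (p i))
    (hindep : iIndepFun
      (fun j => Sum.elim d p j) μ)
    (hunif : ∀ i, μ.map (p i) = (PMF.uniformOfFintype (Fin n → F)).toMeasure) :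
    ∀ B : Finset (Fin m),
      IndepFun (fun ω => fun i : {i : Fin m // i ∉ B} => d i ω)
        (fun ω => ((fun i : Fin m => d i ω + p i ω),
                   (fun i : {i : Fin m // i ∈ B} => d i ω),
                   (fun i : {i : Fin m // i ∈ B} => p i ω))) μ := by
  intro B
  have hf : ∀ j, Measurable (Sum.elim d p j) := Sum.forall.2 ⟨hmd, hmp⟩
  set D := fun ω (i : {i // i ∉ B}) => d i ω
  set P := fun ω (i : {i // i ∉ B}) => p i ω
  set W := fun ω => ((fun i : {i // i ∈ B} => d i ω), (fun i : {i // i ∈ B} => p i ω))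
  have hD : Measurable D := measurable_pi_lambda _ fun i => hmd i
  have hP : Measurable P := measurable_pi_lambda _ fun i => hmp i
  have hW : Measurable W :=
    (measurable_pi_lambda _ fun i : B => hmd i).prodMk (measurable_pi_lambda _ fun i : B => hmp i)
  have hDP : IndepFun D P μ :=
    hindep.indepFun_of_disjoint_range hf (a := Sum.inl ∘ Subtype.val)
      (b := Sum.inr ∘ Subtype.val) (by simp [Set.disjoint_left])
  have hDP_W : IndepFun (fun ω => (D ω, P ω)) W μ :=
    (hindep.indepFun_of_disjoint_range hf (a := Sum.map Subtype.val Subtype.val)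
      (b := Sum.map (Subtype.val (p := (· ∈ B))) Subtype.val) (by simp [Set.disjoint_left])).comp
      (MeasurableEquiv.sumPiEquivProdPi _).measurable
      (MeasurableEquiv.sumPiEquivProdPi _).measurable
  have : (μ.map P).IsAddLeftInvariant :=
    (hindep.precomp (g := Sum.inr ∘ (Subtype.val : {i // i ∉ B} → Fin m))
      (Sum.inr_injective.comp Subtype.val_injective)).isAddLeftInvariant_map (fun i => hmp i)
      fun i => (hunif i).symm ▸ inferInstance
  have hD_QW := hDP_W.indepFun_add_prodMk hD hP hW hDP
  exact (hD_QW.comp measurable_id .of_discrete (ψ := fun z =>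
    (fun i => if h : i ∈ B then z.2.1 ⟨i, h⟩ + z.2.2 ⟨i, h⟩ else z.1 ⟨i, h⟩,
      z.2))).congr (.of_forall fun _ => rfl)
    (.of_forall fun ω => Prod.ext (funext fun i => by simp [D, P, W]) rfl)

theorem stmt_10 {Ω : Type*} [MeasurableSpace Ω] (μ : Measure Ω) [IsProbabilityMeasure μ]
    (F : Type*) [Field F] [Fintype F]
    (n m : ℕ) (hn : 1 ≤ n) (hm : 1 ≤ m)
    [MeasurableSpace (Fin n → F)] [MeasurableSingletonClass (Fin n → F)]
    (d p : Fin m → Ω → (Fin n → F))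
    (hmd : ∀ i, Measurable (d i)) (hmp : ∀ i, Measurable (p i))
    (hindep : iIndepFun
      (fun j => Sum.elim d p j) μ)
    (hunif : ∀ i, μ.map (p i) = (PMF.uniformOfFintype (Fin n → F)).toMeasure) :
    ∀ B : Finset (Fin m),
      IndepFun (fun ω => fun i : {i : Fin m // i ∉ B} => d i ω)
        (fun ω => ((fun i : Fin m => d i ω + p i ω),
                   (fun i : {i : Fin m // i ∈ B} => d i ω),
                   (fun i : {i : Fin m // i ∈ B} => p i ω))) μ :=
  stmt_10_general μ F n m d p hmd hmp hindep hunif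
end

section
/- Let K ≥ 1, N ≥ 1, r = min(K,N), and for integer t with 0 ≤ t < K define R_t = (C(K,t+1) − C(K−r,t+1))/C(K,t). Then R_t is nonincreasing in t: R_{t+1} ≤ R_t for all 0 ≤ t < K−1. -/
lemma hock_aux (m s d : ℕ) :
    m.choose (s+1) + ∑ i ∈ Finset.Ico m (m+d), i.choose s = (m+d).choose (s+1) := by
  induction d with
  | zero => simp
  | succ d ih =>
      rw [← add_assoc,
        Finset.sum_Ico_succ_top (by omega : m ≤ m + d), ← add_assoc, ih,
        Nat.choose_succ_succ (m+d) s, add_comm]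

lemma termwise (i K t : ℕ) (h : i ≤ K) :
    i.choose (t+1) * K.choose t ≤ i.choose t * K.choose (t+1) := by
  have h1 := Nat.choose_succ_right_eq i t
  have h2 := Nat.choose_succ_right_eq K t
  have key : i.choose (t+1) * K.choose t * (t+1) ≤ i.choose t * K.choose (t+1) * (t+1) := by
    calc i.choose (t+1) * K.choose t * (t+1)
        = i.choose (t+1) * (t+1) * K.choose t := by ring
      _ = i.choose t * (i - t) * K.choose t := by rw [h1]
      _ ≤ i.choose t * (K - t) * K.choose t := by
          exact Nat.mul_le_mul_right _ (Nat.mul_le_mul_left _ (by omega))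
      _ = i.choose t * (K.choose t * (K - t)) := by ring
      _ = i.choose t * (K.choose (t+1) * (t+1)) := by rw [h2]
      _ = i.choose t * K.choose (t+1) * (t+1) := by ring
  exact Nat.le_of_mul_le_mul_right key (by omega)

theorem stmt_17 (K N : ℕ) (hK : 1 ≤ K) (hN : 1 ≤ N) (t : ℕ) (ht : t + 1 < K) :
    ((K.choose (t + 2) : ℚ) - ((K - min K N).choose (t + 2) : ℚ)) / (K.choose (t + 1) : ℚ)
      ≤ ((K.choose (t + 1) : ℚ) - ((K - min K N).choose (t + 1) : ℚ)) / (K.choose t : ℚ) := by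
  set m := K - min K N with hm
  have hmK : m + (K - m) = K := by omega
  have e1 : K.choose (t+2) = m.choose (t+2) + ∑ i ∈ Finset.Ico m (m + (K - m)), i.choose (t+1) := by
    rw [hock_aux m (t+1) (K - m), hmK]
  have e2 : K.choose (t+1) = m.choose (t+1) + ∑ i ∈ Finset.Ico m (m + (K - m)), i.choose t := by
    rw [hock_aux m t (K - m), hmK]
  have hpos1 : (0:ℚ) < K.choose (t+1) := by
    exact_mod_cast Nat.choose_pos (by omega)
  have hpos2 : (0:ℚ) < K.choose t := by
    exact_mod_cast Nat.choose_pos (by omega)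
  rw [div_le_div_iff₀ hpos1 hpos2]
  have hnum1 : ((K.choose (t + 2) : ℚ) - (m.choose (t + 2) : ℚ))
      = ((∑ i ∈ Finset.Ico m (m + (K - m)), i.choose (t+1) : ℕ) : ℚ) := by
    rw [e1]; push_cast; ring
  have hnum2 : ((K.choose (t + 1) : ℚ) - (m.choose (t + 1) : ℚ))
      = ((∑ i ∈ Finset.Ico m (m + (K - m)), i.choose t : ℕ) : ℚ) := by
    rw [e2]; push_cast; ring
  rw [hnum1, hnum2]
  have hnat : (∑ i ∈ Finset.Ico m (m + (K - m)), i.choose (t+1)) * K.choose t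
      ≤ (∑ i ∈ Finset.Ico m (m + (K - m)), i.choose t) * K.choose (t+1) := by
    rw [Finset.sum_mul, Finset.sum_mul]
    refine Finset.sum_le_sum (fun i hi => ?_)
    have : i ≤ K := by
      rw [Finset.mem_Ico] at hi; omega
    exact termwise i K t this
  exact_mod_cast hnat
end
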